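/- For the Gaussian linear model y ∼ N(Xβ, σ²Iₙ) with m-dimensional β, MLE β̂, and prior β ∼ N(β̂, n(XᵀX/σ²)⁻¹), the log predictive likelihood equals −(n/2)log(2πσ²) − (1/(2σ²))(y − ŷ)ᵀ(y − ŷ) − (m/2)log(n+1), where ŷ = Xβ̂ = X(XᵀX)⁻¹Xᵀy. -/

import Mathlib

/-!
Since β̂ solves the normal equations, the residual y − ŷ is orthogonal to the columns of X, so
completing the square gives L β = L β̂ − ½ (β − β̂)ᵀ J (β − β̂). The prior has precision J / n, hence
the integrand is e^{L β̂} times the prior's normalising constant times an unnormalised Gaussian of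
precision ((n + 1) / n) J. The two normalising constants differ by
det(((n + 1) / n) J · n J⁻¹)^{-1/2} = (n + 1)^{-m/2}.
-/

open Matrix Real MeasureTheory

namespace Matrix

variable {ι κ : Type*} [Fintype ι]

theorem mulVec_injective_of_rank_eq_card {K : Type*} [Field K] (X : Matrix κ ι K)
    (hX : X.rank = Fintype.card ι) : Function.Injective X.mulVec := by
  have hker : Module.finrank K (LinearMap.ker X.mulVecLin) = 0 := by
    have := X.mulVecLin.finrank_range_add_finrank_ker
    rw [Module.finrank_fintype_fun_eq_card] at this
    unfold rank at hX
    omega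
  rw [← coe_mulVecLin, ← LinearMap.ker_eq_bot]
  exact Submodule.finrank_eq_zero.mp hker

theorem posDef_transpose_mul_self_of_rank_eq_card [Fintype κ] (X : Matrix κ ι ℝ)
    (hX : X.rank = Fintype.card ι) : (Xᵀ * X).PosDef := by
  simpa [conjTranspose_eq_transpose_of_trivial] using
    PosDef.conjTranspose_mul_self X (mulVec_injective_of_rank_eq_card X hX)

theorem transpose_mulVec_sub_mulVec_inv_mulVec_eq_zero [Fintype κ] [DecidableEq ι]
    {R : Type*} [CommRing R] (X : Matrix κ ι R) (hX : IsUnit (Xᵀ * X).det) (y : κ → R) :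
    Xᵀ *ᵥ (y - X *ᵥ ((Xᵀ * X)⁻¹ *ᵥ (Xᵀ *ᵥ y))) = 0 := by
  rw [mulVec_sub, mulVec_mulVec, mulVec_mulVec, mul_nonsing_inv _ hX, one_mulVec, sub_self]

theorem dotProduct_sub_mulVec_self_eq_add [Fintype κ] {R : Type*} [CommRing R]
    (X : Matrix κ ι R) {y : κ → R} {b : ι → R} (hb : Xᵀ *ᵥ (y - X *ᵥ b) = 0) (β : ι → R) :
    (y - X *ᵥ β) ⬝ᵥ (y - X *ᵥ β)
      = (y - X *ᵥ b) ⬝ᵥ (y - X *ᵥ b) + (β - b) ⬝ᵥ (Xᵀ * X) *ᵥ (β - b) := by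
  have hsplit : y - X *ᵥ β = (y - X *ᵥ b) - X *ᵥ (β - b) := by
    rw [mulVec_sub]; abel
  have hcross : (y - X *ᵥ b) ⬝ᵥ X *ᵥ (β - b) = 0 := by
    rw [dotProduct_mulVec, ← mulVec_transpose, hb, zero_dotProduct]
  have hquad : X *ᵥ (β - b) ⬝ᵥ X *ᵥ (β - b) = (β - b) ⬝ᵥ (Xᵀ * X) *ᵥ (β - b) := by
    rw [← mulVec_mulVec, dotProduct_mulVec (β - b), ← mulVec_transpose, transpose_transpose,
      dotProduct_comm]
  rw [hsplit, sub_dotProduct _ _ (_ - _), dotProduct_sub (y - X *ᵥ b), dotProduct_sub (X *ᵥ _),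
    dotProduct_comm (X *ᵥ _), hcross, hquad]
  ring

theorem integral_exp_neg_half_dotProduct_self :
    ∫ x : ι → ℝ, exp (-(1 / 2) * (x ⬝ᵥ x)) = √((2 * π) ^ Fintype.card ι) := by
  have hprod : ∀ x : ι → ℝ, exp (-(1 / 2) * (x ⬝ᵥ x)) = ∏ i, exp (-(1 / 2) * x i ^ 2) := by
    intro x
    rw [← exp_sum, dotProduct, Finset.mul_sum]
    simp only [sq]
  have hone : ∫ t : ℝ, exp (-(1 / 2) * t ^ 2) = √(2 * π) := by
    rw [integral_gaussian, div_div_eq_mul_div, div_one, mul_comm]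
  simp_rw [hprod]
  rw [volume_pi, integral_fintype_prod_eq_pow (fun t : ℝ => exp (-(1 / 2) * t ^ 2)), hone,
    eq_comm, sqrt_eq_iff_mul_self_eq (by positivity) (by positivity), ← mul_pow,
    mul_self_sqrt (by positivity)]

open scoped MatrixOrder in
theorem integral_exp_neg_half_quadForm [DecidableEq ι] {A : Matrix ι ι ℝ} (hA : A.PosDef)
    (c : ι → ℝ) :
    ∫ x : ι → ℝ, exp (-(1 / 2) * ((x - c) ⬝ᵥ A *ᵥ (x - c)))
      = √((2 * π) ^ Fintype.card ι / A.det) := by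
  set S := CFC.sqrt A
  have hSS : S * S = A := CFC.sqrt_mul_sqrt_self A hA.posSemidef.nonneg
  have hST : Sᵀ = S := by
    simpa [IsHermitian, conjTranspose_eq_transpose_of_trivial] using
      (CFC.sqrt_nonneg A).posSemidef.isHermitian
  have hdetS : S.det ^ 2 = A.det := by rw [sq, ← det_mul, hSS]
  have hdetS_ne : S.det ≠ 0 := fun h ↦ hA.det_pos.ne' (by rw [← hdetS, h, sq, zero_mul])
  have hquad : ∀ x : ι → ℝ, x ⬝ᵥ A *ᵥ x = S *ᵥ x ⬝ᵥ S *ᵥ x := fun x ↦ by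
    rw [← hSS, ← mulVec_mulVec, dotProduct_mulVec, ← mulVec_transpose, hST]
  have hg : Continuous fun x : ι → ℝ ↦ exp (-(1 / 2) * (x ⬝ᵥ x)) := by fun_prop
  calc ∫ x : ι → ℝ, exp (-(1 / 2) * ((x - c) ⬝ᵥ A *ᵥ (x - c)))
      = ∫ x : ι → ℝ, exp (-(1 / 2) * (toLin' S x ⬝ᵥ toLin' S x)) := by
        simp_rw [integral_sub_right_eq_self (fun x ↦ exp (-(1 / 2) * (x ⬝ᵥ A *ᵥ x))) c, hquad,
          toLin'_apply]
    _ = ∫ x : ι → ℝ, exp (-(1 / 2) * (x ⬝ᵥ x)) ∂(Measure.map (toLin' S) volume) :=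
        (integral_map (toLin' S).continuous_of_finiteDimensional.aemeasurable
          hg.aestronglyMeasurable).symm
    _ = |S.det|⁻¹ * √((2 * π) ^ Fintype.card ι) := by
        rw [Real.map_matrix_volume_pi_eq_smul_volume_pi hdetS_ne, integral_smul_measure,
          ENNReal.toReal_ofReal (abs_nonneg _), abs_inv, smul_eq_mul,
          integral_exp_neg_half_dotProduct_self]
    _ = √((2 * π) ^ Fintype.card ι / A.det) := by
        rw [← hdetS, sqrt_div' _ (sq_nonneg _), sqrt_sq_eq_abs, inv_mul_eq_div]

theorem integral_exp_neg_half_quadForm_mul_gaussian [DecidableEq ι] {J : Matrix ι ι ℝ}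
    (hJ : J.PosDef) {t : ℝ} (ht : 0 < t) (c : ι → ℝ) :
    ∫ x : ι → ℝ, exp (-(1 / 2) * ((x - c) ⬝ᵥ J *ᵥ (x - c))) *
      ((√((2 * π) ^ Fintype.card ι * (t • J⁻¹).det))⁻¹ *
        exp (-(1 / (2 * t)) * ((x - c) ⬝ᵥ J *ᵥ (x - c))))
      = (√((t + 1) ^ Fintype.card ι))⁻¹ := by
  set Z := √((2 * π) ^ Fintype.card ι * (t • J⁻¹).det) with hZ
  have hpost : (((t + 1) / t) • J).PosDef := hJ.smul (by positivity)
  have hcombine : ∀ x : ι → ℝ, exp (-(1 / 2) * ((x - c) ⬝ᵥ J *ᵥ (x - c))) *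
      (Z⁻¹ * exp (-(1 / (2 * t)) * ((x - c) ⬝ᵥ J *ᵥ (x - c))))
      = Z⁻¹ * exp (-(1 / 2) * ((x - c) ⬝ᵥ (((t + 1) / t) • J) *ᵥ (x - c))) := fun x ↦ by
    rw [mul_left_comm, ← exp_add, smul_mulVec, dotProduct_smul, smul_eq_mul]
    congr 2
    field_simp
    ring
  simp_rw [hcombine]
  have hdetJ := hJ.det_pos
  rw [integral_const_mul, integral_exp_neg_half_quadForm hpost, hZ, det_smul, det_smul,
    det_nonsing_inv, Ring.inverse_eq_inv, ← sqrt_inv, ← sqrt_mul' _ (by positivity), ← sqrt_inv]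
  congr 1
  field_simp
  rw [← mul_pow, mul_div_cancel₀ _ ht.ne']

end Matrix

/-- For the Gaussian linear model y ∼ N(Xβ, σ²Iₙ) with MLE β̂ = (XᵀX)⁻¹Xᵀy and
prior β ∼ N(β̂, n(XᵀX/σ²)⁻¹), the log predictive likelihood equals
−(n/2)log(2πσ²) − (1/(2σ²))(y − ŷ)ᵀ(y − ŷ) − (m/2)log(n+1) with ŷ = Xβ̂. -/
theorem log_predictive_likelihood_gaussian_linear_model {n m : ℕ} (hn : 1 ≤ n)
    (X : Matrix (Fin n) (Fin m) ℝ) (hX : X.rank = m)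
    (σ : ℝ) (hσ : 0 < σ) (y : Fin n → ℝ)
    (βhat : Fin m → ℝ) (hβ : βhat = (Xᵀ * X)⁻¹ *ᵥ (Xᵀ *ᵥ y))
    (yhat : Fin n → ℝ) (hyhat : yhat = X *ᵥ βhat)
    (L : (Fin m → ℝ) → ℝ)
    (hL : ∀ β, L β = -((n : ℝ) / 2) * Real.log (2 * π * σ ^ 2)
      - (1 / (2 * σ ^ 2)) * ((y - X *ᵥ β) ⬝ᵥ (y - X *ᵥ β)))
    (J : Matrix (Fin m) (Fin m) ℝ) (hJ : J = (σ ^ 2)⁻¹ • (Xᵀ * X))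
    (prior : (Fin m → ℝ) → ℝ)
    (hprior : ∀ β, prior β =
      (Real.sqrt ((2 * π) ^ m * ((n : ℝ) • J⁻¹).det))⁻¹ *
        exp (-(1 / (2 * (n : ℝ))) * ((β - βhat) ⬝ᵥ (J *ᵥ (β - βhat))))) :
    Real.log (∫ β : Fin m → ℝ, exp (L β) * prior β)
      = -((n : ℝ) / 2) * Real.log (2 * π * σ ^ 2)
        - (1 / (2 * σ ^ 2)) * ((y - yhat) ⬝ᵥ (y - yhat))
        - ((m : ℝ) / 2) * Real.log ((n : ℝ) + 1) := by
  have hXtX : (Xᵀ * X).PosDef :=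
    posDef_transpose_mul_self_of_rank_eq_card X (by rw [hX, Fintype.card_fin])
  have hJpos : J.PosDef := hJ ▸ hXtX.smul (by positivity)
  have hresid : Xᵀ *ᵥ (y - X *ᵥ βhat) = 0 :=
    hβ ▸ transpose_mulVec_sub_mulVec_inv_mulVec_eq_zero X hXtX.det_pos.ne'.isUnit y
  have hcomplete : ∀ β, L β = L βhat + -(1 / 2) * ((β - βhat) ⬝ᵥ J *ᵥ (β - βhat)) := fun β ↦ by
    rw [hL β, hL βhat, dotProduct_sub_mulVec_self_eq_add X hresid β, hJ, smul_mulVec,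
      dotProduct_smul, smul_eq_mul]
    field_simp
    ring
  conv_lhs => enter [1, 2, β]; rw [hcomplete β, hprior β, exp_add, mul_assoc]
  have hmarginal := integral_exp_neg_half_quadForm_mul_gaussian hJpos (Nat.cast_pos.2 hn) βhat
  rw [Fintype.card_fin] at hmarginal
  rw [integral_const_mul, hmarginal,
    log_mul (exp_ne_zero _) (by positivity), log_exp, hL, ← hyhat, log_inv,
    log_sqrt (by positivity), log_pow]
  ring
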